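/- Let λ be a singular cardinal with θ = cf(λ) ≤ κ < λ, let D be an ultrafilter on κ, and let ⟨λ_i : i < κ⟩ be a sequence of cardinals with lim_D(⟨λ_i : i < κ⟩) = λ and |∏_{i<κ} λ_i / D| = λ. Then it is not the case that for every β < λ the set {i < κ : β < cf(λ_i)} belongs to D; in particular, lim_D(⟨cf(λ_i) : i < κ⟩) < λ. -/

import Mathlib

universe u

open Cardinal Set

/-- Members of the product `∏_{i} λ_i`: functions choosing an ordinal below `(λ i).ord`
for every index `i`. -/
def ProdFun {ι : Type u} (lam : ι → Cardinal.{u}) : Type (u + 1) :=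
  {f : ι → Ordinal.{u} // ∀ i, f i < (lam i).ord}

/-- `D`-equality of members of the product. -/
def prodEquiv {ι : Type u} (D : Ultrafilter ι) (lam : ι → Cardinal.{u})
    (f g : ProdFun lam) : Prop :=
  {i | f.1 i = g.1 i} ∈ D

/-- The reduced product `∏_{i} λ_i / D`. -/
def ProdQuot {ι : Type u} (D : Ultrafilter ι) (lam : ι → Cardinal.{u}) : Type (u + 1) :=
  Quot (prodEquiv D lam)

/-- The cardinality of the reduced product `∏_{i} λ_i / D`. -/
noncomputable def prodCard {ι : Type u} (D : Ultrafilter ι) (lam : ι → Cardinal.{u}) :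
    Cardinal.{u + 1} :=
  Cardinal.mk (ProdQuot D lam)

/-- `μ = lim_D ⟨λ_i : i < κ⟩` : for every `β < μ`, the set `{i : β < λ_i ≤ μ}` is in `D`. -/
def IsLimD {ι : Type u} (D : Ultrafilter ι) (lam : ι → Cardinal.{u}) (μ : Cardinal.{u}) :
    Prop :=
  ∀ β < μ, {i | β < lam i ∧ lam i ≤ μ} ∈ D

/-
If `{i | β < cf λ_i} ∈ D` for every `β < λ`, then any fewer than `λ` members of the reduced
product have a strict `<_D`-upper bound: take the successor of their pointwise supremum wherever
`cf λ_i` exceeds their number. Since `λ` is singular, a family of `λ` members splits into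
`cf λ < λ` initial segments of size `< λ`; bounding each segment and then the bounds gives a
strict upper bound for all `λ` members. An enumeration of the whole reduced product would thus be
bounded by one of its own members, which is absurd.
-/

theorem exists_forall_rel_of_mk_eq_of_cof_lt {α : Type*} {r : α → α → Prop} [IsTrans α r]
    {la : Cardinal.{u}} (hla : ℵ₀ ≤ la) (hcof : la.ord.cof < la)
    (hbound : ∀ (σ : Type u) (F : σ → α), #σ < la → ∃ g, ∀ s, r (F s) g)
    {τ : Type u} (hτ : #τ = la) (F : τ → α) : ∃ g, ∀ t, r (F t) g := by
  obtain ⟨e⟩ : Nonempty (τ ≃ la.ord.ToType) := Cardinal.eq.1 (by rw [hτ, mk_ord_toType])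
  obtain ⟨S, hS, hScard⟩ := Order.exists_cof_eq la.ord.ToType
  rw [Ordinal.cof_toType] at hScard
  have hsegment (s : S) : ∃ g, ∀ t : {t // e t ≤ s.1}, r (F t) g := by
    have hIic : #(Iic s.1) < #la.ord.ToType := mk_Iic_lt s.1 (by simp) (by simpa using hla)
    rw [mk_ord_toType] at hIic
    have hsub : #{t // e t ≤ s.1} = #(Iic s.1) :=
      (e.subtypeEquiv (q := (· ∈ Iic s.1)) fun _ => Iff.rfl).cardinal_eq
    exact hbound _ _ (hsub.trans_lt hIic)
  choose g hg using hsegment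
  obtain ⟨G, hG⟩ := hbound S g (hScard ▸ hcof)
  refine ⟨G, fun t => ?_⟩
  obtain ⟨s, hsS, hts⟩ := hS (e t)
  exact _root_.trans (hg ⟨s, hsS⟩ ⟨t, hts⟩) (hG ⟨s, hsS⟩)

theorem IsLimD.setOf_lt_mem {ι : Type u} {D : Ultrafilter ι} {c : ι → Cardinal.{u}}
    {μ β : Cardinal.{u}} (h : IsLimD D c μ) (hβ : β < μ) : {i | β < c i} ∈ D :=
  Filter.mem_of_superset (h β hβ) fun _ hi => hi.1

section ReducedProduct

variable {ι : Type u} (D : Ultrafilter ι) (lam : ι → Cardinal.{u})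

theorem prodEquiv_equivalence : Equivalence (prodEquiv D lam) where
  refl _ := Filter.Eventually.of_forall (f := (D : Filter ι)) fun _ => rfl
  symm h := by simpa only [prodEquiv, eq_comm] using h
  trans h₁ h₂ :=
    (Filter.Eventually.and (f := (D : Filter ι)) h₁ h₂).mono fun _ h => h.1.trans h.2

def prodLt (f g : ProdFun lam) : Prop := {i | f.1 i < g.1 i} ∈ D

instance : IsTrans (ProdFun lam) (prodLt D lam) where
  trans _ _ _ h₁ h₂ :=
    (Filter.Eventually.and (f := (D : Filter ι)) h₁ h₂).mono fun _ h => h.1.trans h.2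

theorem not_prodEquiv_of_prodLt {f g : ProdFun lam} (h : prodLt D lam f g) :
    ¬ prodEquiv D lam f g := fun he =>
  (Filter.Eventually.and (f := (D : Filter ι)) h he).exists.elim fun _ h => h.1.ne h.2

variable {D lam}

theorem exists_forall_prodLt_of_mk_lt {la : Cardinal.{u}} (hla : ℵ₀ < la)
    (hcof : ∀ β < la, {i | β < (lam i).ord.cof} ∈ D) (f₀ : ProdFun lam)
    (σ : Type u) (F : σ → ProdFun lam) (hσ : #σ < la) :
    ∃ g, ∀ s, prodLt D lam (F s) g := by
  set β := #σ ⊔ ℵ₀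
  have hβ : β < la := max_lt hσ hla
  refine ⟨⟨fun i => if β < (lam i).ord.cof then Order.succ (⨆ s, (F s).1 i) else f₀.1 i,
    fun i => ?_⟩, fun s => Filter.mem_of_superset (hcof β hβ) fun i hi => ?_⟩
  · dsimp only
    split_ifs with h
    · have hlim : Order.IsSuccLimit (lam i).ord :=
        Ordinal.one_lt_cof_iff.1 (Ordinal.aleph0_le_cof_iff.1 (le_sup_right.trans_lt h).le)
      exact hlim.succ_lt (Ordinal.iSup_lt_of_lt_cof (le_sup_left.trans_lt h) fun s => (F s).2 i)
    · exact f₀.2 i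
  · show (F s).1 i < if β < (lam i).ord.cof then Order.succ (⨆ s, (F s).1 i) else f₀.1 i
    rw [if_pos (show β < (lam i).ord.cof from hi)]
    exact (Ordinal.le_iSup (fun s => (F s).1 i) s).trans_lt (Order.lt_succ _)

theorem prodCard_ne_of_cof_lt {la : Cardinal.{u}} (hla : ℵ₀ < la) (hsing : la.ord.cof < la)
    (hcof : ∀ β < la, {i | β < (lam i).ord.cof} ∈ D) :
    prodCard D lam ≠ Cardinal.lift.{u + 1} la := by
  intro hcard
  obtain ⟨e⟩ : Nonempty (la.ord.ToType ≃ ProdQuot D lam) :=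
    Cardinal.lift_mk_eq'.1 (by rw [mk_ord_toType, lift_id'.{u, u + 1}]; exact hcard.symm)
  let F : la.ord.ToType → ProdFun lam := fun t => (e t).out
  obtain ⟨t₀⟩ := nonempty_ord_toType hla.ne_bot
  obtain ⟨G, hG⟩ := exists_forall_rel_of_mk_eq_of_cof_lt hla.le hsing
    (exists_forall_prodLt_of_mk_lt hla hcof (F t₀)) (mk_ord_toType la) F
  set t := e.symm (Quot.mk _ G)
  have hFt : Quot.mk (prodEquiv D lam) (F t) = Quot.mk _ G :=
    (Quot.out_eq (e t)).trans (e.apply_symm_apply _)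
  exact not_prodEquiv_of_prodLt D lam (hG t)
    ((prodEquiv_equivalence D lam).eqvGen_iff.1 (Quot.eq.1 hFt))

end ReducedProduct

theorem stmt_17_general {ι : Type u} (la : Cardinal.{u})
    (hla : ℵ₀ ≤ la) (hsing : ¬ la.IsRegular)
    (D : Ultrafilter ι) (lam : ι → Cardinal.{u})
    (hcard : prodCard D lam = Cardinal.lift.{u + 1} la) :
    (¬ ∀ β < la, {i | β < (lam i).ord.cof} ∈ D) ∧
      ∀ μ : Cardinal.{u}, IsLimD D (fun i => (lam i).ord.cof) μ → μ < la := by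
  have hcof : la.ord.cof < la := (Ordinal.cof_ord_le la).lt_of_ne fun h => hsing ⟨hla, h.ge⟩
  have haleph0 : ℵ₀ < la :=
    (Ordinal.aleph0_le_cof_iff.2 (Ordinal.one_lt_cof_iff.2 (isSuccLimit_ord hla))).trans_lt hcof
  have hunbounded : ¬ ∀ β < la, {i | β < (lam i).ord.cof} ∈ D := fun H =>
    prodCard_ne_of_cof_lt haleph0 hcof H hcard
  exact ⟨hunbounded, fun μ hμ => lt_of_not_ge fun hle =>
    hunbounded fun β hβ => hμ.setOf_lt_mem (hβ.trans_le hle)⟩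

theorem stmt_17 {ι : Type u} (κ θ la : Cardinal.{u}) (hι : #ι = κ)
    (hla : ℵ₀ ≤ la) (hsing : ¬ la.IsRegular)
    (hθ : θ = la.ord.cof) (hθκ : θ ≤ κ) (hκla : κ < la)
    (D : Ultrafilter ι) (lam : ι → Cardinal.{u})
    (hlim : IsLimD D lam la)
    (hcard : prodCard D lam = Cardinal.lift.{u + 1} la) :
    (¬ ∀ β < la, {i | β < (lam i).ord.cof} ∈ D) ∧
      ∀ μ : Cardinal.{u}, IsLimD D (fun i => (lam i).ord.cof) μ → μ < la :=
  stmt_17_general la hla hsing D lam hcard
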